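/- Greedy guarantee for weakly submodular maximization: let f : 2^[q] → ℝ be monotone nondecreasing with f(∅) = 0, and suppose f is γ-weakly submodular with γ ∈ (0,1]. Let S_m be the set built by the greedy algorithm that for m steps adds the element with the largest marginal gain. Then for any set T of size m, f(S_m) ≥ (1 − (1 − γ/m)^m) · f(T) ≥ (1 − e^{−γ}) · f(T). -/

import Mathlib

/-- Greedy guarantee for γ-weakly submodular maximization:
`f (S m) ≥ (1 − (1 − γ/m)^m) f T ≥ (1 − e^{−γ}) f T` for any `T` with `|T| = m`. -/
theorem greedy_weakly_submodular_guarantee (q m : ℕ) (hm : 1 ≤ m)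
    (γ : ℝ) (hγ0 : 0 < γ) (hγ1 : γ ≤ 1)
    (f : Finset (Fin q) → ℝ)
    (hmono : ∀ A B : Finset (Fin q), A ⊆ B → f A ≤ f B)
    (hempty : f ∅ = 0)
    (hws : ∀ L P : Finset (Fin q), Disjoint L P →
      (∑ i ∈ P, (f (insert i L) - f L)) ≥ γ * (f (L ∪ P) - f L))
    (S : ℕ → Finset (Fin q)) (hS0 : S 0 = ∅)
    (hgreedy : ∀ t, ∃ i : Fin q, S (t + 1) = insert i (S t) ∧
      ∀ j : Fin q, f (insert j (S t)) - f (S t) ≤ f (insert i (S t)) - f (S t))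
    (T : Finset (Fin q)) (hT : T.card = m) :
    f (S m) ≥ (1 - (1 - γ / m) ^ m) * f T ∧
      (1 - (1 - γ / m) ^ m) * f T ≥ (1 - Real.exp (-γ)) * f T := by
  have hm' : (1:ℝ) ≤ m := by exact_mod_cast hm
  have hmpos : (0:ℝ) < m := lt_of_lt_of_le one_pos hm'
  have hfT : 0 ≤ f T := by
    have := hmono ∅ T (Finset.empty_subset T); linarith [hempty ▸ this]
  have hc : 0 ≤ 1 - γ / m := by
    have h1 : γ / m ≤ 1 := by rw [div_le_one hmpos]; linarith
    linarith
  have step : ∀ t, f T - f (S (t+1)) ≤ (1 - γ/m) * (f T - f (S t)) := by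
    intro t
    obtain ⟨i, hSt1, hmax⟩ := hgreedy t
    set δ := f (insert i (S t)) - f (S t) with hδ
    have hδ0 : 0 ≤ δ := by
      have := hmono (S t) (insert i (S t)) (Finset.subset_insert _ _)
      simp only [hδ]; linarith
    have hdisj : Disjoint (S t) (T \ S t) := Finset.disjoint_sdiff
    have hsum := hws (S t) (T \ S t) hdisj
    have hsum_le : (∑ j ∈ T \ S t, (f (insert j (S t)) - f (S t))) ≤ (m : ℝ) * δ := by
      calc (∑ j ∈ T \ S t, (f (insert j (S t)) - f (S t)))
          ≤ ∑ _j ∈ T \ S t, δ := Finset.sum_le_sum (fun j _ => hmax j)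
        _ = ((T \ S t).card : ℝ) * δ := by rw [Finset.sum_const, nsmul_eq_mul]
        _ ≤ (m : ℝ) * δ := by
            apply mul_le_mul_of_nonneg_right _ hδ0
            exact_mod_cast (hT ▸ Finset.card_le_card (Finset.sdiff_subset))
    have hunion : f T ≤ f (S t ∪ (T \ S t)) := by
      rw [Finset.union_sdiff_self_eq_union]
      exact hmono T (S t ∪ T) Finset.subset_union_right
    have key : γ * (f T - f (S t)) ≤ (m:ℝ) * δ := by
      nlinarith [hsum, hsum_le, hunion, hγ0.le]
    have hδge : γ / m * (f T - f (S t)) ≤ δ := by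
      rw [div_mul_eq_mul_div, div_le_iff₀ hmpos]
      nlinarith [key]
    have hval : f (S (t+1)) = f (S t) + δ := by rw [hSt1]; simp [hδ]
    have expand : (1 - γ/m) * (f T - f (S t))
        = (f T - f (S t)) - γ/m * (f T - f (S t)) := by ring
    rw [hval, expand]; linarith
  have main : ∀ t, f T - f (S t) ≤ (1 - γ/m)^t * f T := by
    intro t
    induction t with
    | zero => simp [hS0, hempty]
    | succ t ih =>
      calc f T - f (S (t+1)) ≤ (1-γ/m) * (f T - f (S t)) := step t
        _ ≤ (1-γ/m) * ((1-γ/m)^t * f T) := mul_le_mul_of_nonneg_left ih hc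
        _ = (1-γ/m)^(t+1) * f T := by ring
  constructor
  · have := main m
    have h2 : (1 - (1 - γ/m)^m) * f T = f T - (1-γ/m)^m * f T := by ring
    rw [ge_iff_le, h2]; linarith
  · have hpow : (1 - γ/m)^m ≤ Real.exp (-γ) := by
      have h1 : 1 - γ/m ≤ Real.exp (-(γ/m)) := by
        have := Real.add_one_le_exp (-(γ/m)); linarith
      calc (1-γ/m)^m ≤ (Real.exp (-(γ/m)))^m := pow_le_pow_left₀ hc h1 m
        _ = Real.exp (-γ) := by
            rw [← Real.exp_nat_mul]
            congr 1
            field_simp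
    nlinarith [hpow, hfT]
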